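/- Let g = (a b; 0 d) be an integer matrix with ad = n > 0, a > 0, c = 0, and let z = x+iy with y > 0. If u(z, gz) < δ where u(z,w) = |z−w|²/(4 Im z Im w), then |a − d| ≤ 2√(nδ) and |(a−d)x + b| ≤ 2√(nδ)·y. -/

import Mathlib

open Complex

noncomputable def pointPairInvariant (z w : ℂ) : ℝ :=
  ‖z - w‖ ^ 2 / (4 * z.im * w.im)

lemma pointPairInvariant_div_eq {a b d : ℝ} (hd : d ≠ 0) (z : ℂ) :
    pointPairInvariant z ((a * z + b) / d) =
      ‖((a - d : ℝ) : ℂ) * z + b‖ ^ 2 / (4 * (a * d) * z.im ^ 2) := by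
  have hsub : z - (a * z + b) / d = -(((a - d : ℝ) : ℂ) * z + b) / d := by
    have : (d : ℂ) ≠ 0 := ofReal_ne_zero.mpr hd
    field_simp
    push_cast
    ring
  have him : ((a * z + b) / d).im = a * z.im / d := by
    simp [Complex.div_ofReal_im]
  rw [pointPairInvariant, hsub, him, norm_div, norm_neg, Complex.norm_real, Real.norm_eq_abs,
    div_pow, sq_abs]
  field_simp

lemma norm_sq_real_mul_add_real (p q : ℝ) (z : ℂ) :
    ‖p * z + q‖ ^ 2 = (p * z.re + q) ^ 2 + (p * z.im) ^ 2 := by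
  rw [Complex.sq_norm, Complex.normSq_apply]
  simp only [add_re, add_im, mul_re, mul_im, ofReal_re, ofReal_im]
  ring

lemma abs_le_two_mul_sqrt_mul_of_sq_le {p m s : ℝ} (hs : 0 ≤ s) (h : p ^ 2 ≤ 4 * m * s ^ 2) :
    |p| ≤ 2 * √m * s := by
  calc |p| = √(p ^ 2) := (Real.sqrt_sq_eq_abs p).symm
    _ ≤ √(m * (2 * s) ^ 2) := Real.sqrt_le_sqrt (by linarith)
    _ = 2 * √m * s := by rw [Real.sqrt_mul' m (sq_nonneg _), Real.sqrt_sq (by positivity)]; ring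

lemma sq_add_sq_lt_of_pointPairInvariant_lt {a b d δ : ℝ} (had : 0 < a * d) {z : ℂ}
    (hz : 0 < z.im) (hu : pointPairInvariant z ((a * z + b) / d) < δ) :
    ((a - d) * z.re + b) ^ 2 + ((a - d) * z.im) ^ 2 < 4 * (a * d) * δ * z.im ^ 2 := by
  have hd : d ≠ 0 := by rintro rfl; simp at had
  rw [pointPairInvariant_div_eq hd, norm_sq_real_mul_add_real, div_lt_iff₀ (by positivity)] at hu
  linarith

theorem upper_triangular_bounds_general (a b d n : ℤ) (x y δ : ℝ)
    (hdet : a * d = n) (hn : 0 < n) (hy : 0 < y) :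
    let z : ℂ := (x : ℂ) + (y : ℂ) * Complex.I
    let gz : ℂ := ((a : ℂ) * z + (b : ℂ)) / (d : ℂ)
    let u : ℝ := ‖z - gz‖ ^ 2 / (4 * z.im * gz.im)
    u < δ →
      |(a : ℝ) - (d : ℝ)| ≤ 2 * Real.sqrt (n * δ) ∧
      |((a : ℝ) - (d : ℝ)) * x + (b : ℝ)| ≤ 2 * Real.sqrt (n * δ) * y := by
  intro z gz u hu
  have had : (a : ℝ) * d = n := by exact_mod_cast hdet
  have hre : z.re = x := by simp [z]
  have him : z.im = y := by simp [z]
  have key := sq_add_sq_lt_of_pointPairInvariant_lt (b := b)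
    (had ▸ (by exact_mod_cast hn)) (him ▸ hy) hu
  rw [hre, him, had, mul_assoc 4] at key
  refine ⟨?_, abs_le_two_mul_sqrt_mul_of_sq_le hy.le
    (by linarith [sq_nonneg (((a : ℝ) - d) * y)])⟩
  have hbound := abs_le_two_mul_sqrt_mul_of_sq_le hy.le (p := (a - d) * y) (m := n * δ)
    (by linarith [sq_nonneg (((a : ℝ) - d) * x + b)])
  rw [abs_mul, abs_of_pos hy] at hbound
  exact le_of_mul_le_mul_right hbound hy

theorem upper_triangular_bounds (a b d n : ℤ) (x y δ : ℝ)
    (hdet : a * d = n) (hn : 0 < n) (ha : 0 < a) (hy : 0 < y) (hδ : 0 ≤ δ) :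
    let z : ℂ := (x : ℂ) + (y : ℂ) * Complex.I
    let gz : ℂ := ((a : ℂ) * z + (b : ℂ)) / (d : ℂ)
    let u : ℝ := ‖z - gz‖ ^ 2 / (4 * z.im * gz.im)
    u < δ →
      |(a : ℝ) - (d : ℝ)| ≤ 2 * Real.sqrt (n * δ) ∧
      |((a : ℝ) - (d : ℝ)) * x + (b : ℝ)| ≤ 2 * Real.sqrt (n * δ) * y :=
  upper_triangular_bounds_general a b d n x y δ hdet hn hy
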